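/- arXiv:1407.1440 — 3 statements merged into one kernel-verified Lean document; each statement's English description precedes it below -/
import Mathlib

section
/- Let O be an order ideal in k[x_1,...,x_n] with border ∂O, let LM ⊆ ∂O_min (minimal boundary monomials) and TM ⊆ O_max (maximal basis monomials) satisfy LM ∩ ∂TM = ∅, where ∂TM = {x_k·t : 1 ≤ k ≤ n, t ∈ TM}. Let I be the ideal generated by {b − N_b : b ∈ LM, N_b ∈ Span_k(TM)} together with all boundary monomials not in LM. Then for each variable x_k there is an exponent e_k ≥ 0 with x_k^{e_k} ∈ I; consequently the zero set of I is contained in {origin} of A^n. -/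
open MvPolynomial

/-- let `O` be an order ideal with border `∂O`, `LM ⊆ ∂O_min`,
`TM ⊆ O_max` with `LM ∩ ∂TM = ∅`, and let `I` be generated by
`{b - N_b : b ∈ LM}` (with `N_b ∈ Span_k(TM)`) together with all boundary
monomials outside `LM`.  Then each variable has a power lying in `I`, and the
zero set of `I` is contained in the origin. -/
theorem stmt9 {k : Type*} [Field k] {n : ℕ}
    (O LM TM : Finset (Fin n →₀ ℕ)) (h0 : 0 ∈ O)
    (hOI : ∀ m ∈ O, ∀ m' : Fin n →₀ ℕ, m' ≤ m → m' ∈ O)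
    (border : Set (Fin n →₀ ℕ))
    (hborder : border = {b | b ∉ O ∧
      ∃ (i : Fin n) (t : Fin n →₀ ℕ), t ∈ O ∧ b = t + Finsupp.single i 1})
    (hLMsub : ↑LM ⊆ border)
    (hLMmin : ∀ b ∈ LM, ∀ i : Fin n, Finsupp.single i 1 ≤ b → b - Finsupp.single i 1 ∈ O)
    (hTMsub : TM ⊆ O)
    (hTMmax : ∀ t ∈ TM, ∀ i : Fin n, t + Finsupp.single i 1 ∈ border)
    (hdisj : ∀ t ∈ TM, ∀ i : Fin n, t + Finsupp.single i 1 ∉ LM)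
    (N : (Fin n →₀ ℕ) → MvPolynomial (Fin n) k)
    (hN : ∀ b ∈ LM, N b ∈ Submodule.span k
      ((fun t => (monomial t 1 : MvPolynomial (Fin n) k)) '' TM))
    (I : Ideal (MvPolynomial (Fin n) k))
    (hI : I = Ideal.span
      ({g | ∃ b ∈ LM, g = monomial b 1 - N b} ∪
       {g | ∃ b ∈ border \ ↑LM, g = (monomial b 1 : MvPolynomial (Fin n) k)})) :
    (∀ i : Fin n, ∃ e : ℕ, (X i : MvPolynomial (Fin n) k) ^ e ∈ I) ∧
    (∀ x : Fin n → k, (∀ f ∈ I, MvPolynomial.eval x f = 0) → x = 0) := by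
  -- monomials of border \ LM lie in I
  have hbmem : ∀ b ∈ border, b ∉ LM → (monomial b 1 : MvPolynomial (Fin n) k) ∈ I := by
    intro b hb hbLM
    rw [hI]
    exact Ideal.subset_span (Or.inr ⟨b, ⟨hb, hbLM⟩, rfl⟩)
  have main : ∀ i : Fin n, ∃ e : ℕ, (X i : MvPolynomial (Fin n) k) ^ e ∈ I := by
    intro i
    have hex : ∃ e : ℕ, Finsupp.single i e ∉ O := by
      refine ⟨(O.sup fun m => m i) + 1, fun h => ?_⟩
      have h2 : (Finsupp.single i ((O.sup fun m => m i) + 1)) i ≤ O.sup fun m => m i :=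
        Finset.le_sup (f := fun m => m i) h
      rw [Finsupp.single_eq_same] at h2
      omega
    set e := Nat.find hex with he
    have hspec : Finsupp.single i e ∉ O := Nat.find_spec hex
    have hepos : 0 < e := by
      rcases Nat.eq_zero_or_pos e with h | h
      · exfalso; apply hspec; rw [h]; simpa using h0
      · exact h
    have hprev : Finsupp.single i (e - 1) ∈ O := by
      by_contra hc
      have := Nat.find_min' hex hc
      omega
    have hbb : Finsupp.single i e ∈ border := by
      rw [hborder]
      refine ⟨hspec, i, Finsupp.single i (e - 1), hprev, ?_⟩
      rw [← Finsupp.single_add]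
      congr 1
      omega
    by_cases hLM : Finsupp.single i e ∈ LM
    · -- multiply the generator by X i
      refine ⟨e + 1, ?_⟩
      have hg : (monomial (Finsupp.single i e) 1 - N (Finsupp.single i e)) ∈ I := by
        rw [hI]
        exact Ideal.subset_span (Or.inl ⟨Finsupp.single i e, hLM, rfl⟩)
      have hXN : (X i : MvPolynomial (Fin n) k) * N (Finsupp.single i e) ∈ I := by
        have := hN _ hLM
        refine Submodule.span_induction ?_ ?_ ?_ ?_ this
        · rintro p ⟨t, ht, rfl⟩
          have : (X i : MvPolynomial (Fin n) k) * monomial t 1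
              = monomial (t + Finsupp.single i 1) 1 := by
            rw [X, monomial_mul]
            rw [add_comm]
            ring_nf
          rw [this]
          exact hbmem _ (hTMmax t ht i) (hdisj t ht i)
        · simp
        · intro p q _ _ hp hq
          rw [mul_add]; exact I.add_mem hp hq
        · intro c p _ hp
          rw [Algebra.smul_def, mul_left_comm]
          exact I.smul_mem _ hp
      have key : (X i : MvPolynomial (Fin n) k) ^ (e + 1)
          = X i * (monomial (Finsupp.single i e) 1 - N (Finsupp.single i e))
            + X i * N (Finsupp.single i e) := by
        rw [mul_sub, sub_add_cancel, X_pow_eq_monomial, X, monomial_mul,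
          one_mul, ← Finsupp.single_add, add_comm 1 e]
      rw [key]
      exact I.add_mem (I.mul_mem_left _ hg) hXN
    · exact ⟨e, by rw [X_pow_eq_monomial]; exact hbmem _ hbb hLM⟩
  refine ⟨main, fun x hx => ?_⟩
  funext i
  obtain ⟨e, he⟩ := main i
  have h0' := hx _ he
  rw [map_pow, eval_X] at h0'
  rcases Nat.eq_zero_or_pos e with h | h
  · rw [h, pow_zero] at h0'; exact absurd h0' one_ne_zero
  · exact (pow_eq_zero_iff (by omega : e ≠ 0)).mp h0'
end

section
/- Let O be an order ideal with border ∂O = {b_1,...,b_ν}, and let B = {g_j} be an O-border basis of an ideal I with sets LM ⊆ ∂O of leading monomials and G = {g_j : b_j ∈ LM}, where g_j = b_j for b_j ∉ LM. Define Q = ∂LM ∪ ∂TM where ∂LM = {x_k b : b ∈ LM} and ∂TM = {x_k t : t ∈ TM}. Then I = (G) if and only if: (i) every boundary monomial b_j ∉ LM is divisible by some monomial in Q, and (ii) Q ⊆ (G). -/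
open MvPolynomial

/-- let `B = {g_b : b ∈ ∂O}` be an `O`-border basis of `I` with
leading monomials `LM`, trailing monomials `TM` (so `g_b = b - N_b` for `b ∈ LM`
and `g_b = b` otherwise), and `Q = ∂LM ∪ ∂TM`.  Then `I = (G)` (where
`G = {b - N_b : b ∈ LM}`) iff (i) every boundary monomial outside `LM` is
divisible by a monomial of `Q`, and (ii) `Q ⊆ (G)`. -/
theorem stmt10 {k : Type*} [Field k] {n : ℕ}
    (O LM TM : Finset (Fin n →₀ ℕ)) (h0 : 0 ∈ O)
    (hOI : ∀ m ∈ O, ∀ m' : Fin n →₀ ℕ, m' ≤ m → m' ∈ O)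
    (border : Set (Fin n →₀ ℕ))
    (hborder : border = {b | b ∉ O ∧
      ∃ (i : Fin n) (t : Fin n →₀ ℕ), t ∈ O ∧ b = t + Finsupp.single i 1})
    (hLMsub : ↑LM ⊆ border)
    (hLMmin : ∀ b ∈ LM, ∀ i : Fin n, Finsupp.single i 1 ≤ b → b - Finsupp.single i 1 ∈ O)
    (hTMsub : TM ⊆ O)
    (hTMmax : ∀ t ∈ TM, ∀ i : Fin n, t + Finsupp.single i 1 ∈ border)
    (hdisj : ∀ t ∈ TM, ∀ i : Fin n, t + Finsupp.single i 1 ∉ LM)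
    (N : (Fin n →₀ ℕ) → MvPolynomial (Fin n) k)
    (hN : ∀ b ∈ LM, N b ∈ Submodule.span k
      ((fun t => (monomial t 1 : MvPolynomial (Fin n) k)) '' TM))
    (g : (Fin n →₀ ℕ) → MvPolynomial (Fin n) k)
    (hg : ∀ b ∈ border, g b = if b ∈ LM then monomial b 1 - N b else monomial b 1)
    (I : Ideal (MvPolynomial (Fin n) k))
    (hI : I = Ideal.span {f | ∃ b ∈ border, f = g b})
    -- `B` is an `O`-border *basis* of `I`: the images of the monomials in `O`
    -- form a `k`-basis of the quotient
    (hbasisInd : LinearIndependent k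
      (fun t : O => Ideal.Quotient.mk I (monomial t.1 (1 : k))))
    (hbasisSpan : Submodule.span k
      (Ideal.Quotient.mk I '' ((fun t => (monomial t 1 : MvPolynomial (Fin n) k)) '' O)) = ⊤)
    (Q : Set (Fin n →₀ ℕ))
    (hQ : Q = {q | ∃ b ∈ LM, ∃ i : Fin n, q = b + Finsupp.single i 1} ∪
              {q | ∃ t ∈ TM, ∃ i : Fin n, q = t + Finsupp.single i 1}) :
    I = Ideal.span {f | ∃ b ∈ LM, f = monomial b 1 - N b} ↔
      ((∀ b ∈ border \ ↑LM, ∃ q ∈ Q, q ≤ b) ∧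
       (∀ q ∈ Q, (monomial q 1 : MvPolynomial (Fin n) k) ∈
          Ideal.span {f | ∃ b ∈ LM, f = monomial b 1 - N b})) := by
  set J : Ideal (MvPolynomial (Fin n) k) :=
    Ideal.span {f | ∃ b ∈ LM, f = monomial b 1 - N b} with hJ
  -- J ⊆ I always
  have hgenI : ∀ b ∈ border, g b ∈ I := by
    intro b hb
    rw [hI]
    exact Ideal.subset_span ⟨b, hb, rfl⟩
  have hJI : J ≤ I := by
    rw [hJ, Ideal.span_le]
    rintro f ⟨b, hbLM, rfl⟩
    have hb : b ∈ border := hLMsub hbLM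
    have := hgenI b hb
    rwa [hg b hb, if_pos hbLM] at this
  -- monomials of Q are always in I
  have hQI : ∀ q ∈ Q, (monomial q (1 : k)) ∈ I := by
    rw [hQ]
    rintro q (⟨b, hbLM, i, rfl⟩ | ⟨t, htTM, i, rfl⟩)
    · -- q = b + e_i, b ∈ LM
      have hb : b ∈ border := hLMsub hbLM
      have hXN : (monomial (Finsupp.single i 1) (1 : k)) * N b ∈ I := by
        refine Submodule.span_induction ?_ ?_ ?_ ?_ (hN b hbLM)
        · rintro x ⟨t, htTM, rfl⟩
          rw [monomial_mul, one_mul]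
          have hb' : t + Finsupp.single i 1 ∈ border := hTMmax t htTM i
          have := hgenI _ hb'
          rw [hg _ hb', if_neg (hdisj t htTM i)] at this
          rwa [add_comm]
        · simp
        · intro x y _ _ hx hy
          rw [mul_add]; exact Ideal.add_mem I hx hy
        · intro a x _ hx
          rw [mul_smul_comm]
          exact (I.restrictScalars k).smul_mem a hx
      have key : (monomial (b + Finsupp.single i 1) (1 : k)) =
          (monomial (Finsupp.single i 1) (1 : k)) * (monomial b 1 - N b) +
          (monomial (Finsupp.single i 1) (1 : k)) * N b := by
        rw [mul_sub, sub_add_cancel, monomial_mul, one_mul, add_comm]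
      rw [key]
      refine Ideal.add_mem I ?_ hXN
      have hgb := hgenI b hb
      rw [hg b hb, if_pos hbLM] at hgb
      exact Ideal.mul_mem_left I _ hgb
    · -- q = t + e_i, t ∈ TM
      have hb' : t + Finsupp.single i 1 ∈ border := hTMmax t htTM i
      have := hgenI _ hb'
      rwa [hg _ hb', if_neg (hdisj t htTM i)] at this
  constructor
  · -- forward
    intro hIJ
    refine ⟨?_, fun q hq => hIJ ▸ hQI q hq⟩
    intro b hb
    obtain ⟨hbB, hbLM⟩ := hb
    -- monomial b ∈ J
    have hmbJ : (monomial b (1 : k)) ∈ J := by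
      have := hgenI b hbB
      rw [hg b hbB, if_neg (by simpa using hbLM), hIJ] at this
      exact this
    -- J ⊆ monomial ideal of LM ∪ TM
    set MI : Ideal (MvPolynomial (Fin n) k) :=
      Ideal.span ((fun s => (monomial s (1 : k))) '' (↑LM ∪ ↑TM)) with hMI
    have hJMI : J ≤ MI := by
      rw [hJ, Ideal.span_le]
      rintro f ⟨c, hcLM, rfl⟩
      refine Ideal.sub_mem MI (Ideal.subset_span ⟨c, Or.inl hcLM, rfl⟩) ?_
      have hsub : ((fun t => (monomial t (1 : k))) '' ↑TM) ⊆
          (MI.restrictScalars k : Set (MvPolynomial (Fin n) k)) := by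
        rintro x ⟨t, htTM, rfl⟩
        exact Ideal.subset_span ⟨t, Or.inr htTM, rfl⟩
      exact Submodule.span_le.mpr hsub (hN c hcLM)
    have hmb : (monomial b (1 : k)) ∈ MI := hJMI hmbJ
    rw [hMI, MvPolynomial.mem_ideal_span_monomial_image] at hmb
    have hbsupp : b ∈ ((monomial b (1 : k)).support) := by
      classical
      rw [MvPolynomial.support_monomial, if_neg (one_ne_zero)]
      exact Finset.mem_singleton_self b
    obtain ⟨m, hm, hmle⟩ := hmb b hbsupp
    -- m < b in both cases
    have hmne : m ≠ b := by
      rcases hm with hmLM | hmTM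
      · exact fun h => hbLM (h ▸ hmLM)
      · intro h
        have hbO : b ∉ O := by
          rw [hborder] at hbB; exact hbB.1
        exact hbO (h ▸ hTMsub hmTM)
    obtain ⟨i, hi⟩ : ∃ i, m i < b i := by
      by_contra h
      push_neg at h
      exact hmne (le_antisymm hmle (fun j => h j))
    have hqle : m + Finsupp.single i 1 ≤ b := by
      intro j
      rcases eq_or_ne j i with rfl | hne
      · simpa [Finsupp.single_apply] using hi
      · simpa [Finsupp.single_apply, Ne.symm hne] using hmle j
    refine ⟨m + Finsupp.single i 1, ?_, hqle⟩
    rw [hQ]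
    rcases hm with hmLM | hmTM
    · exact Or.inl ⟨m, hmLM, i, rfl⟩
    · exact Or.inr ⟨m, hmTM, i, rfl⟩
  · -- backward
    rintro ⟨h1, h2⟩
    refine le_antisymm ?_ hJI
    rw [hI, Ideal.span_le]
    rintro f ⟨b, hbB, rfl⟩
    rw [hg b hbB]
    split_ifs with hbLM
    · exact Ideal.subset_span ⟨b, hbLM, rfl⟩
    · obtain ⟨q, hqQ, hqle⟩ := h1 b ⟨hbB, hbLM⟩
      have : (monomial b (1 : k)) = (monomial (b - q) (1 : k)) * (monomial q 1) := by
        rw [monomial_mul, one_mul, tsub_add_cancel_of_le hqle]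
      rw [this]
      exact Ideal.mul_mem_left J _ (h2 q hqQ)
end

section
/- For n ≥ 3, 1 < κ < n, 2 ≤ r < s, the set of boundary monomials of the lex-segment complement order ideal O of shape (n,κ,r,s) in degree d, for r+1 ≤ d ≤ s, equals the set of degree-d monomials of front degree exactly 1 (i.e., divisible by exactly one front variable, to the first power). Consequently |∂O_d| = (n−κ)·C(κ−2+d, d−1) for r+1 ≤ d ≤ s. -/
/-! A monomial of degree `d` with `r < d ≤ s` lies outside `O` exactly when it involves a front
variable. Writing it as `x_α · t`, the cofactor `t` has degree `d - 1 ∈ [r, s]`, so `t ∈ O` exactly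
when `t` involves no front variable; hence the boundary in degree `d` consists of the monomials of
front degree `1`. Such a monomial is a front variable times a monomial of degree `d - 1` in the `κ`
back variables, which gives `(n - κ) · multichoose κ (d - 1)` of them. -/

open Finset

/-- The lex-segment complement order ideal of shape `(n,κ,r,s)`, as a set of
exponent vectors: all monomials of degree `< r`, together with all monomials of
degree `d`, `r ≤ d ≤ s`, in the back variables (indices `i` with `(i:ℕ) ≥ n - κ`). -/
def shapeO (n κ r s : ℕ) : Set (Fin n →₀ ℕ) :=
  {m | (∑ i, m i) < r ∨
    (r ≤ (∑ i, m i) ∧ (∑ i, m i) ≤ s ∧ ∀ i : Fin n, (i : ℕ) < n - κ → m i = 0)}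

/-- The front degree of a monomial: total degree in the front variables. -/
def frontDeg (n κ : ℕ) (m : Fin n →₀ ℕ) : ℕ :=
  ∑ i ∈ univ.filter (fun i : Fin n => (i : ℕ) < n - κ), m i

section Counting

variable {ι : Type*} [Fintype ι]

theorem card_sum_eq_multichoose (e : ℕ) :
    Nat.card {f : ι → ℕ // ∑ i, f i = e} = (Fintype.card ι).multichoose e := by
  classical
  rw [← Nat.card_congr (Sym.equivNatSumOfFintype ι e), Nat.card_eq_fintype_card,
    Sym.card_sym_eq_multichoose]

theorem card_sum_filter_eq_and_sum_filter_not_eq (p : ι → Prop) [DecidablePred p] (a b : ℕ) :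
    Nat.card {f : ι → ℕ // ∑ i ∈ univ.filter p, f i = a ∧ ∑ i ∈ univ.filter (¬ p ·), f i = b} =
      (Fintype.card {i // p i}).multichoose a * (Fintype.card {i // ¬ p i}).multichoose b := by
  let e : {f : ι → ℕ // ∑ i ∈ univ.filter p, f i = a ∧ ∑ i ∈ univ.filter (¬ p ·), f i = b} ≃
      {g : ({i // p i} → ℕ) × ({i // ¬ p i} → ℕ) // ∑ i, g.1 i = a ∧ ∑ i, g.2 i = b} :=
    (Equiv.piEquivPiSubtypeProd p fun _ => ℕ).subtypeEquiv fun f => by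
      rw [Finset.sum_subtype (p := p) _ (by simp), Finset.sum_subtype (p := (¬ p ·)) _ (by simp)]
      rfl
  rw [Nat.card_congr (e.trans (Equiv.subtypeProdEquivProd
      (p := fun g : {i // p i} → ℕ => ∑ i, g i = a)
      (q := fun g : {i // ¬ p i} → ℕ => ∑ i, g i = b))),
    Nat.card_prod, card_sum_eq_multichoose, card_sum_eq_multichoose]

end Counting

section FrontDegree

variable {n : ℕ} (κ : ℕ)

theorem sum_apply_add_single (t : Fin n →₀ ℕ) (α : Fin n) :
    ∑ i, (t + Finsupp.single α 1 : Fin n →₀ ℕ) i = ∑ i, t i + 1 := by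
  simp [Finset.sum_add_distrib]

theorem frontDeg_add (m m' : Fin n →₀ ℕ) :
    frontDeg n κ (m + m') = frontDeg n κ m + frontDeg n κ m' :=
  Finset.sum_add_distrib

theorem frontDeg_single (α : Fin n) (k : ℕ) :
    frontDeg n κ (Finsupp.single α k) = if (α : ℕ) < n - κ then k else 0 := by
  simp [frontDeg, Finsupp.single_apply]

theorem frontDeg_eq_zero_iff (m : Fin n →₀ ℕ) :
    frontDeg n κ m = 0 ↔ ∀ i : Fin n, (i : ℕ) < n - κ → m i = 0 := by
  simp [frontDeg, Finset.sum_eq_zero_iff]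

theorem exists_eq_add_single_of_frontDeg_eq_one {m : Fin n →₀ ℕ} (hm : frontDeg n κ m = 1) :
    ∃ α : Fin n, (α : ℕ) < n - κ ∧
      ∃ t : Fin n →₀ ℕ, frontDeg n κ t = 0 ∧ m = t + Finsupp.single α 1 := by
  obtain ⟨α, hα, hmα⟩ := Finset.exists_ne_zero_of_sum_ne_zero (hm.trans_ne one_ne_zero)
  rw [Finset.mem_filter] at hα
  have hle : Finsupp.single α 1 ≤ m := Finsupp.single_le_iff.2 (Nat.one_le_iff_ne_zero.2 hmα)
  have hm' : m = (m - Finsupp.single α 1) + Finsupp.single α 1 :=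
    (tsub_add_cancel_of_le hle).symm
  refine ⟨α, hα.2, m - Finsupp.single α 1, ?_, hm'⟩
  have := frontDeg_add κ (m - Finsupp.single α 1) (Finsupp.single α 1)
  rw [← hm', frontDeg_single, if_pos hα.2, hm] at this
  omega

end FrontDegree

section Boundary

variable {n κ r s : ℕ}

theorem mem_shapeO_iff (m : Fin n →₀ ℕ) :
    m ∈ shapeO n κ r s ↔
      ∑ i, m i < r ∨ (r ≤ ∑ i, m i ∧ ∑ i, m i ≤ s ∧ frontDeg n κ m = 0) := by
  rw [shapeO, Set.mem_ofPred_eq, frontDeg_eq_zero_iff]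

theorem boundary_shapeO_eq {d : ℕ} (hrd : r + 1 ≤ d) (hds : d ≤ s) :
    {m : Fin n →₀ ℕ | m ∉ shapeO n κ r s ∧ ∑ i, m i = d ∧
        ∃ (α : Fin n) (t : Fin n →₀ ℕ), t ∈ shapeO n κ r s ∧ m = t + Finsupp.single α 1} =
      {m | ∑ i, m i = d ∧ frontDeg n κ m = 1} := by
  ext m
  simp only [Set.mem_ofPred_eq, mem_shapeO_iff]
  constructor
  · rintro ⟨hmO, hdeg, α, t, htO, rfl⟩
    simp only [sum_apply_add_single] at hdeg hmO ⊢
    have ht : frontDeg n κ t = 0 := by omega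
    rw [frontDeg_add, frontDeg_single, ht] at hmO ⊢
    split_ifs at hmO ⊢ <;> omega
  · rintro ⟨hdeg, hfront⟩
    obtain ⟨α, -, t, ht, rfl⟩ := exists_eq_add_single_of_frontDeg_eq_one κ hfront
    rw [sum_apply_add_single] at hdeg ⊢
    exact ⟨by omega, hdeg, α, t, by omega, rfl⟩

end Boundary

theorem ncard_frontDeg_eq_one {n κ d : ℕ} (hκn : κ ≤ n) (hd : 1 ≤ d) :
    {m : Fin n →₀ ℕ | ∑ i, m i = d ∧ frontDeg n κ m = 1}.ncard =
      (n - κ) * κ.multichoose (d - 1) := by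
  let e : {m : Fin n →₀ ℕ | ∑ i, m i = d ∧ frontDeg n κ m = 1} ≃
      {f : Fin n → ℕ // ∑ i ∈ univ.filter (fun i : Fin n => (i : ℕ) < n - κ), f i = 1 ∧
        ∑ i ∈ univ.filter (fun i : Fin n => ¬ (i : ℕ) < n - κ), f i = d - 1} :=
    Finsupp.equivFunOnFinite.subtypeEquiv fun m => by
      show ∑ i, m i = d ∧ frontDeg n κ m = 1 ↔ ∑ i ∈ _, m i = 1 ∧ ∑ i ∈ _, m i = d - 1
      rw [frontDeg,
        ← Finset.sum_filter_add_sum_filter_not univ (fun i : Fin n => (i : ℕ) < n - κ)]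
      exact ⟨fun h => ⟨h.2, by omega⟩, fun h => ⟨by omega, h.1⟩⟩
  have hfront : Fintype.card {i : Fin n // (i : ℕ) < n - κ} = n - κ := by
    rw [Fintype.card_subtype, Fin.card_filter_val_lt, min_eq_right (Nat.sub_le n κ)]
  have hback : Fintype.card {i : Fin n // ¬ (i : ℕ) < n - κ} = κ := by
    rw [Fintype.card_subtype_compl, hfront, Fintype.card_fin]
    omega
  rw [← Nat.card_coe_set_eq, Nat.card_congr e, card_sum_filter_eq_and_sum_filter_not_eq, hfront,
    hback, Nat.multichoose_one_right]

theorem stmt11_general (n κ r s d : ℕ) (hκ1 : 1 < κ) (hκn : κ < n)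
    (hd1 : r + 1 ≤ d) (hd2 : d ≤ s) :
    ({m : Fin n →₀ ℕ | m ∉ shapeO n κ r s ∧ (∑ i, m i) = d ∧
        ∃ (α : Fin n) (t : Fin n →₀ ℕ), t ∈ shapeO n κ r s ∧ m = t + Finsupp.single α 1}
      = {m : Fin n →₀ ℕ | (∑ i, m i) = d ∧ frontDeg n κ m = 1}) ∧
    ∀ F : Finset (Fin n →₀ ℕ),
      (F : Set (Fin n →₀ ℕ)) = {m | (∑ i, m i) = d ∧ frontDeg n κ m = 1} →
      F.card = (n - κ) * Nat.choose (κ - 2 + d) (d - 1) := by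
  refine ⟨boundary_shapeO_eq hd1 hd2, fun F hF => ?_⟩
  rw [← Set.ncard_coe_finset, hF, ncard_frontDeg_eq_one hκn.le (by omega), Nat.multichoose_eq]
  congr 2
  omega

/-- for `r+1 ≤ d ≤ s`, the boundary monomials of degree `d` of the
lex-segment complement order ideal of shape `(n,κ,r,s)` are exactly the degree-`d`
monomials of front degree exactly `1`; consequently there are
`(n-κ)·C(κ-2+d, d-1)` of them. -/
theorem stmt11 (n κ r s d : ℕ) (hn : 3 ≤ n) (hκ1 : 1 < κ) (hκn : κ < n)
    (hr : 2 ≤ r) (hrs : r < s) (hd1 : r + 1 ≤ d) (hd2 : d ≤ s) :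
    ({m : Fin n →₀ ℕ | m ∉ shapeO n κ r s ∧ (∑ i, m i) = d ∧
        ∃ (α : Fin n) (t : Fin n →₀ ℕ), t ∈ shapeO n κ r s ∧ m = t + Finsupp.single α 1}
      = {m : Fin n →₀ ℕ | (∑ i, m i) = d ∧ frontDeg n κ m = 1}) ∧
    ∀ F : Finset (Fin n →₀ ℕ),
      (F : Set (Fin n →₀ ℕ)) = {m | (∑ i, m i) = d ∧ frontDeg n κ m = 1} →
      F.card = (n - κ) * Nat.choose (κ - 2 + d) (d - 1) :=
  stmt11_general n κ r s d hκ1 hκn hd1 hd2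
end
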